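/- arXiv:1508.06847 — 2 statements merged into one kernel-verified Lean document; each statement's English description precedes it below -/
import Mathlib

section
/- Let G be a graph, S ⊆ V(G), v, v' vertices of G, and S' = S ∪ {v'}. If t(G,S',v) < t(G,S,v), then there exists an S'-infection path starting at v' and ending at v, i.e., a path P = v' = w_0, w_1, ..., w_m = v such that t(G,S',w_i) < t(G,S',w_{i+1}) for all 0 ≤ i ≤ m-1. -/
open SimpleGraph

/-- One round of 2-neighbor bootstrap percolation: add every vertex with
at least two (distinct) infected neighbors. -/
def infectStep {V : Type} (G : SimpleGraph V) (S : Set V) : Set V :=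
  S ∪ {v | ∃ u w, u ≠ w ∧ G.Adj v u ∧ G.Adj v w ∧ u ∈ S ∧ w ∈ S}

/-- The infected set after `n` rounds starting from `S`. -/
def stage {V : Type} (G : SimpleGraph V) (S : Set V) : ℕ → Set V
  | 0 => S
  | n + 1 => infectStep G (stage G S n)

/-- `S` percolates: eventually every vertex is infected. -/
def Percolates {V : Type} (G : SimpleGraph V) (S : Set V) : Prop :=
  ∃ t, stage G S t = Set.univ

/-- The infection time of `v` (`⊤` if `v` is never infected). -/
noncomputable def infTime {V : Type} (G : SimpleGraph V) (S : Set V) (v : V) : ℕ∞ :=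
  sInf {n : ℕ∞ | ∃ i : ℕ, n = (i : ℕ∞) ∧ v ∈ stage G S i}

/-- The percolation time of a percolating set `S`. -/
noncomputable def percTime {V : Type} (G : SimpleGraph V) (S : Set V) : ℕ :=
  sInf {t | stage G S t = Set.univ}

/-- The maximum percolation time `t(G)`. -/
noncomputable def maxTime {V : Type} (G : SimpleGraph V) : ℕ :=
  sSup {t | ∃ S : Set V, Percolates G S ∧ percTime G S = t}

/-- `w` lists the vertices of an induced (chordless) path in `G`. -/
def IsInducedPath {V : Type} (G : SimpleGraph V) {n : ℕ} (w : Fin (n + 1) → V) : Prop :=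
  Function.Injective w ∧
    ∀ i j : Fin (n + 1), G.Adj (w i) (w j) ↔ (i.1 + 1 = j.1 ∨ j.1 + 1 = i.1)

lemma stage_mono {V : Type} (G : SimpleGraph V) (S : Set V) : Monotone (stage G S) := by
  apply monotone_nat_of_le_succ
  intro n
  exact Set.subset_union_left

lemma infTime_le_iff {V : Type} (G : SimpleGraph V) (S : Set V) (v : V) (k : ℕ) :
    infTime G S v ≤ (k : ℕ∞) ↔ v ∈ stage G S k := by
  constructor
  · intro h
    by_contra hv
    have h1 : ((k : ℕ∞) + 1) ≤ infTime G S v := by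
      apply le_sInf
      rintro n ⟨i, rfl, hi⟩
      by_cases hik : i ≤ k
      · exact absurd (stage_mono G S hik hi) hv
      · push_neg at hik
        exact_mod_cast Nat.succ_le_of_lt hik
    have h2 := h1.trans h
    exact absurd h2 (by exact_mod_cast Nat.not_succ_le_self k)
  · intro h
    exact sInf_le ⟨k, rfl, h⟩

theorem stmt1 {V : Type} (G : SimpleGraph V) (S : Set V) (v v' : V)
    (h : infTime G (S ∪ {v'}) v < infTime G S v) :
    ∃ (m : ℕ) (w : Fin (m + 1) → V), w 0 = v' ∧ w (Fin.last m) = v ∧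
      Function.Injective w ∧
      (∀ i : Fin m, G.Adj (w i.castSucc) (w i.succ)) ∧
      ∀ i : Fin m, infTime G (S ∪ {v'}) (w i.castSucc) < infTime G (S ∪ {v'}) (w i.succ) := by
  have key : ∀ k : ℕ, ∀ v : V, infTime G (S ∪ {v'}) v = (k : ℕ∞) →
      infTime G (S ∪ {v'}) v < infTime G S v →
      ∃ (m : ℕ) (w : Fin (m + 1) → V), w 0 = v' ∧ w (Fin.last m) = v ∧
        Function.Injective w ∧
        (∀ i : Fin m, G.Adj (w i.castSucc) (w i.succ)) ∧
        ∀ i : Fin m, infTime G (S ∪ {v'}) (w i.castSucc) < infTime G (S ∪ {v'}) (w i.succ) := by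
    intro k
    induction k using Nat.strong_induction_on with
    | _ k ih =>
      intro v hk hlt
      match k with
      | 0 =>
        -- v ∈ S ∪ {v'}, and v ∉ S, so v = v'
        have hmem : v ∈ stage G (S ∪ {v'}) 0 :=
          (infTime_le_iff G (S ∪ {v'}) v 0).mp (le_of_eq hk)
        have hvS : v ∉ S := by
          intro hvS
          have h0 : infTime G S v ≤ (0 : ℕ∞) :=
            (infTime_le_iff G S v 0).mpr hvS
          have := hlt.trans_le h0
          exact absurd this (by simp)
        have hvv' : v = v' := by
          rcases hmem with hS | hv'
          · exact absurd hS hvS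
          · exact hv'
        refine ⟨0, fun _ => v', rfl, hvv'.symm, ?_, ?_, ?_⟩
        · intro a b _; exact Subsingleton.elim (α := Fin 1) a b
        · exact fun i => i.elim0
        · exact fun i => i.elim0
      | k' + 1 =>
        have hmem : v ∈ stage G (S ∪ {v'}) (k' + 1) :=
          (infTime_le_iff G (S ∪ {v'}) v (k' + 1)).mp (le_of_eq hk)
        have hnot : v ∉ stage G (S ∪ {v'}) k' := by
          intro hv
          have := (infTime_le_iff G (S ∪ {v'}) v k').mpr hv
          rw [hk] at this
          exact absurd (by exact_mod_cast this) (Nat.not_succ_le_self k')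
        have hnotS : v ∉ stage G S (k' + 1) := by
          intro hv
          have := (infTime_le_iff G S v (k' + 1)).mpr hv
          have := hlt.trans_le this
          rw [hk] at this
          exact absurd this (lt_irrefl _)
        -- from hmem: infectStep
        have hmem' : v ∈ infectStep G (stage G (S ∪ {v'}) k') := hmem
        rcases hmem' with hv | ⟨a, b, hab, hadjva, hadjvb, ha, hb⟩
        · exact absurd hv hnot
        -- one of a, b is not in stage G S k'
        have hone : ∃ u, G.Adj v u ∧ u ∈ stage G (S ∪ {v'}) k' ∧ u ∉ stage G S k' := by
          by_cases haS : a ∈ stage G S k'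
          · by_cases hbS : b ∈ stage G S k'
            · exfalso
              apply hnotS
              exact Or.inr ⟨a, b, hab, hadjva, hadjvb, haS, hbS⟩
            · exact ⟨b, hadjvb, hb, hbS⟩
          · exact ⟨a, hadjva, ha, haS⟩
        obtain ⟨u, hadjvu, huS', huS⟩ := hone
        have htu_le : infTime G (S ∪ {v'}) u ≤ (k' : ℕ∞) :=
          (infTime_le_iff G (S ∪ {v'}) u k').mpr huS'
        have htuS : (k' : ℕ∞) < infTime G S u := by
          by_contra hle
          push_neg at hle
          exact huS ((infTime_le_iff G S u k').mp hle)
        have htlt : infTime G (S ∪ {v'}) u < infTime G S u := htu_le.trans_lt htuS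
        obtain ⟨j, hj⟩ : ∃ j : ℕ, infTime G (S ∪ {v'}) u = (j : ℕ∞) := by
          have : infTime G (S ∪ {v'}) u ≠ ⊤ := by
            intro ht; rw [ht] at htu_le
            exact absurd htu_le (by simp)
          obtain ⟨j, hj⟩ := WithTop.ne_top_iff_exists.mp this
          exact ⟨j, hj.symm⟩
        have hjlt : j < k' + 1 := by
          rw [hj] at htu_le
          have : j ≤ k' := by exact_mod_cast htu_le
          omega
        obtain ⟨m, w, hw0, hwl, hinj, hadj, hmono⟩ := ih j hjlt u hj htlt
        -- t'(w i) ≤ t'(u) < t'(v)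
        have hsm : StrictMono (fun i => infTime G (S ∪ {v'}) (w i)) := by
          rw [Fin.strictMono_iff_lt_succ]
          exact hmono
        have htv : infTime G (S ∪ {v'}) v = ((k' : ℕ∞) + 1) := by
          rw [hk]; push_cast; ring
        have hlt_v : ∀ i : Fin (m + 1), infTime G (S ∪ {v'}) (w i) < infTime G (S ∪ {v'}) v := by
          intro i
          have h1 : infTime G (S ∪ {v'}) (w i) ≤ infTime G (S ∪ {v'}) (w (Fin.last m)) :=
            hsm.monotone (Fin.le_last i)
          rw [hwl] at h1
          refine (h1.trans htu_le).trans_lt ?_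
          rw [htv]
          exact_mod_cast Nat.lt_succ_self k'
        have hvne : ∀ i : Fin (m + 1), w i ≠ v := by
          intro i hiv
          have := hlt_v i
          rw [hiv] at this
          exact absurd this (lt_irrefl _)
        refine ⟨m + 1, Fin.snoc w v, ?_, ?_, ?_, ?_, ?_⟩
        · rw [← Fin.castSucc_zero, Fin.snoc_castSucc]; exact hw0
        · exact Fin.snoc_last (α := fun _ => V) v w
        · intro x y hxy
          induction x using Fin.lastCases with
          | last =>
            induction y using Fin.lastCases with
            | last => rfl
            | cast y =>
              rw [Fin.snoc_last, Fin.snoc_castSucc] at hxy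
              exact absurd hxy.symm (hvne y)
          | cast x =>
            induction y using Fin.lastCases with
            | last =>
              rw [Fin.snoc_last, Fin.snoc_castSucc] at hxy
              exact absurd hxy (hvne x)
            | cast y =>
              rw [Fin.snoc_castSucc, Fin.snoc_castSucc] at hxy
              rw [hinj hxy]
        · intro i
          induction i using Fin.lastCases with
          | last =>
            rw [Fin.succ_last, Fin.snoc_last, Fin.snoc_castSucc, hwl]
            exact hadjvu.symm
          | cast i =>
            rw [Fin.succ_castSucc, Fin.snoc_castSucc, Fin.snoc_castSucc]
            exact hadj i
        · intro i
          induction i using Fin.lastCases with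
          | last =>
            rw [Fin.succ_last, Fin.snoc_last, Fin.snoc_castSucc]
            exact hlt_v (Fin.last m)
          | cast i =>
            rw [Fin.succ_castSucc, Fin.snoc_castSucc, Fin.snoc_castSucc]
            exact hmono i
  obtain ⟨k, hk⟩ : ∃ k : ℕ, infTime G (S ∪ {v'}) v = (k : ℕ∞) := by
    have : infTime G (S ∪ {v'}) v ≠ ⊤ := (h.trans_le le_top).ne
    obtain ⟨k, hk⟩ := WithTop.ne_top_iff_exists.mp this
    exact ⟨k, hk.symm⟩
  exact key k v hk h
end

section
/- Let G be a graph with maximum degree 3 and suppose G contains an induced path P = v_1, v_2, ..., v_t in which every vertex has degree 3 in G except v_t, which has degree 2. Let S' be the set of all neighbors of vertices of P that lie outside V(P), and let Y be the set of vertices neither in V(P) nor adjacent to any vertex of V(P). Then S = S' ∪ Y is a percolating set of G and t(G,S,v_i) = i for all 1 ≤ i ≤ t; in particular t(G) ≥ t. -/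
open SimpleGraph

lemma stage_subset_succ {V : Type} (G : SimpleGraph V) (S : Set V) (n : ℕ) :
    stage G S n ⊆ stage G S (n + 1) := Set.subset_union_left

lemma stage_fix {V : Type} (G : SimpleGraph V) (S : Set V) {k : ℕ}
    (h : stage G S (k+1) = stage G S k) : ∀ n, k ≤ n → stage G S n = stage G S k := by
  intro n hn
  induction n with
  | zero =>
    have hk0 : k = 0 := by omega
    simp [hk0]
  | succ n ih =>
    rcases Nat.lt_or_ge k (n+1) with h' | h'
    · have hik := ih (by omega)
      show infectStep G (stage G S n) = _
      rw [hik]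
      exact h
    · have : k = n + 1 := by omega
      simp [this]

lemma percTime_le_card {V : Type} [Fintype V] (G : SimpleGraph V) (S : Set V)
    (h : Percolates G S) : percTime G S ≤ Fintype.card V := by
  have hne : {t | stage G S t = Set.univ}.Nonempty := h
  have hm : stage G S (percTime G S) = Set.univ := Nat.sInf_mem hne
  set m := percTime G S with hmdef
  have hstrict : ∀ k, k < m → stage G S k ≠ stage G S (k+1) := by
    intro k hk heq
    have := stage_fix G S heq.symm m (by omega)
    have hku : stage G S k = Set.univ := by rw [← this]; exact hm
    have : m ≤ k := Nat.sInf_le hku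
    omega
  have hcard : ∀ k, k ≤ m → k ≤ (stage G S k).ncard := by
    intro k hk
    induction k with
    | zero => omega
    | succ k ih =>
      have h1 : stage G S k ⊂ stage G S (k+1) :=
        HasSubset.Subset.ssubset_of_ne (stage_subset_succ G S k) (hstrict k (by omega))
      have h2 : (stage G S k).ncard < (stage G S (k+1)).ncard :=
        Set.ncard_lt_ncard h1 (Set.toFinite _)
      have := ih (by omega)
      omega
  calc m ≤ (stage G S m).ncard := hcard m le_rfl
    _ ≤ (Set.univ : Set V).ncard := Set.ncard_le_ncard (Set.subset_univ _) (Set.toFinite _)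
    _ = Fintype.card V := by rw [Set.ncard_univ, Nat.card_eq_fintype_card]

theorem stmt4 {V : Type} [Fintype V] [DecidableEq V] (G : SimpleGraph V) [DecidableRel G.Adj]
    (hmax : ∀ u, G.degree u ≤ 3) (t : ℕ) (ht : 1 ≤ t) (w : Fin t → V)
    (hinj : Function.Injective w)
    (hindu : ∀ i j : Fin t, G.Adj (w i) (w j) ↔ (i.1 + 1 = j.1 ∨ j.1 + 1 = i.1))
    (hdeg3 : ∀ i : Fin t, i ≠ ⟨t - 1, by omega⟩ → G.degree (w i) = 3)
    (hdeg2 : G.degree (w ⟨t - 1, by omega⟩) = 2)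
    (S' Y S : Set V)
    (hS' : S' = {u | u ∉ Set.range w ∧ ∃ i, G.Adj u (w i)})
    (hY : Y = {u | u ∉ Set.range w ∧ ∀ i, ¬ G.Adj u (w i)})
    (hS : S = S' ∪ Y) :
    Percolates G S ∧ (∀ i : Fin t, infTime G S (w i) = ((i.1 + 1 : ℕ) : ℕ∞)) ∧
      t ≤ maxTime G := by
  classical
  have hmemS : ∀ u, u ∈ S ↔ u ∉ Set.range w := by
    intro u
    rw [hS, hS', hY]
    simp only [Set.mem_union, Set.mem_setOf_eq]
    constructor
    · rintro (⟨h, -⟩ | ⟨h, -⟩) <;> exact h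
    · intro h
      by_cases hadj : ∃ i, G.Adj u (w i)
      · exact Or.inl ⟨h, hadj⟩
      · exact Or.inr ⟨h, fun i hi => hadj ⟨i, hi⟩⟩
  set off : Fin t → Finset V :=
    fun i => (G.neighborFinset (w i)).filter (fun u => u ∉ Set.range w) with hoffdef
  have hoffmem : ∀ (i : Fin t) (u : V), u ∈ off i ↔ (G.Adj (w i) u ∧ u ∉ Set.range w) := by
    intro i u
    simp [hoffdef, SimpleGraph.mem_neighborFinset]
  have hsplit : ∀ i : Fin t,
      ((G.neighborFinset (w i)).filter (fun u => u ∈ Set.range w)).card + (off i).card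
        = G.degree (w i) := by
    intro i
    rw [hoffdef]
    exact Finset.card_filter_add_card_filter_not _
  have hpathfilter : ∀ (i : Fin t) (u : V),
      u ∈ (G.neighborFinset (w i)).filter (fun u => u ∈ Set.range w) ↔
        ∃ j : Fin t, w j = u ∧ (i.1 + 1 = j.1 ∨ j.1 + 1 = i.1) := by
    intro i u
    simp only [Finset.mem_filter, SimpleGraph.mem_neighborFinset, Set.mem_range]
    constructor
    · rintro ⟨hadj, j, rfl⟩
      exact ⟨j, rfl, (hindu i j).1 hadj⟩
    · rintro ⟨j, rfl, hj⟩
      exact ⟨(hindu i j).2 hj, j, rfl⟩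
  have hoffcard1 : ∀ i : Fin t, 1 ≤ i.1 → (off i).card = 1 := by
    intro i hi
    have hprev : i.1 - 1 < t := by omega
    by_cases hlast : i.1 = t - 1
    · have hpf : (G.neighborFinset (w i)).filter (fun u => u ∈ Set.range w)
          = {w ⟨i.1 - 1, hprev⟩} := by
        ext u
        rw [hpathfilter]
        simp only [Finset.mem_singleton]
        constructor
        · rintro ⟨j, rfl, hj | hj⟩
          · exact absurd j.isLt (by omega)
          · exact congrArg w (Fin.ext (show j.1 = i.1 - 1 by omega))
        · rintro rfl
          exact ⟨⟨i.1 - 1, hprev⟩, rfl, Or.inr (show i.1 - 1 + 1 = i.1 by omega)⟩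
      have hieq : i = ⟨t - 1, by omega⟩ := Fin.ext hlast
      have hdeg : G.degree (w i) = 2 := by rw [hieq]; exact hdeg2
      have := hsplit i
      rw [hpf, hdeg, Finset.card_singleton] at this
      omega
    · have hnext : i.1 + 1 < t := by
        have := i.isLt; omega
      have hpf : (G.neighborFinset (w i)).filter (fun u => u ∈ Set.range w)
          = {w ⟨i.1 - 1, hprev⟩, w ⟨i.1 + 1, hnext⟩} := by
        ext u
        rw [hpathfilter]
        simp only [Finset.mem_insert, Finset.mem_singleton]
        constructor
        · rintro ⟨j, rfl, hj | hj⟩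
          · exact Or.inr (congrArg w (Fin.ext (show j.1 = i.1 + 1 by omega)))
          · exact Or.inl (congrArg w (Fin.ext (show j.1 = i.1 - 1 by omega)))
        · rintro (rfl | rfl)
          · exact ⟨⟨i.1 - 1, hprev⟩, rfl, Or.inr (show i.1 - 1 + 1 = i.1 by omega)⟩
          · exact ⟨⟨i.1 + 1, hnext⟩, rfl, Or.inl (show i.1 + 1 = i.1 + 1 from rfl)⟩
      have hdeg : G.degree (w i) = 3 := by
        apply hdeg3
        intro hcon
        exact hlast (congrArg Fin.val hcon)
      have hne : w ⟨i.1 - 1, hprev⟩ ≠ w ⟨i.1 + 1, hnext⟩ := by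
        intro hcon
        have h2 : i.1 - 1 = i.1 + 1 := congrArg Fin.val (hinj hcon)
        omega
      have := hsplit i
      rw [hpf, Finset.card_insert_of_notMem (by simpa using hne), Finset.card_singleton] at this
      omega
  have hoff0 : ∀ i : Fin t, i.1 = 0 → 2 ≤ (off i).card := by
    intro i hi0
    by_cases ht1 : t = 1
    · have hpf : (G.neighborFinset (w i)).filter (fun u => u ∈ Set.range w) = ∅ := by
        ext u
        rw [hpathfilter]
        simp only [Finset.notMem_empty, iff_false, not_exists]
        rintro j ⟨rfl, hj | hj⟩ <;> (have := j.isLt; omega)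
      have hieq : i = ⟨t - 1, by omega⟩ := Fin.ext (by omega)
      have hdeg : G.degree (w i) = 2 := by rw [hieq]; exact hdeg2
      have := hsplit i
      rw [hpf, Finset.card_empty, hdeg] at this
      omega
    · have hone : (1 : ℕ) < t := by omega
      have hpf : (G.neighborFinset (w i)).filter (fun u => u ∈ Set.range w)
          = {w ⟨1, hone⟩} := by
        ext u
        rw [hpathfilter]
        simp only [Finset.mem_singleton]
        constructor
        · rintro ⟨j, rfl, hj | hj⟩
          · exact congrArg w (Fin.ext (show j.1 = 1 by omega))
          · exact absurd hj (by omega)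
        · rintro rfl
          exact ⟨⟨1, hone⟩, rfl, Or.inl (show i.1 + 1 = 1 by omega)⟩
      have hdeg : G.degree (w i) = 3 := by
        apply hdeg3
        intro hcon
        have := congrArg Fin.val hcon
        simp [hi0] at this
        omega
      have := hsplit i
      rw [hpf, Finset.card_singleton, hdeg] at this
      omega
  -- the key description of the stages
  have key : ∀ n, stage G S n = S ∪ (w '' {j : Fin t | (j : ℕ) < n}) := by
    intro n
    induction n with
    | zero =>
      show S = _
      have h0 : {j : Fin t | (j : ℕ) < 0} = ∅ := by ext j; simp
      rw [h0]
      simp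
    | succ n ih =>
      show infectStep G (stage G S n) = _
      rw [ih, infectStep]
      ext v
      simp only [Set.mem_union, Set.mem_setOf_eq, Set.mem_image]
      constructor
      · rintro ((hv | ⟨j, hj, rfl⟩) | ⟨u, u', hne, hadj, hadj', hu, hu'⟩)
        · exact Or.inl hv
        · exact Or.inr ⟨j, by omega, rfl⟩
        · by_cases hvS : v ∈ S
          · exact Or.inl hvS
          · have hvr : v ∈ Set.range w := by
              by_contra hc
              exact hvS ((hmemS v).2 hc)
            obtain ⟨i, rfl⟩ := hvr
            refine Or.inr ⟨i, ?_, rfl⟩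
            by_contra hlt
            push_neg at hlt
            have hclaim : ∀ x, G.Adj (w i) x →
                (x ∈ S ∨ ∃ j : Fin t, (j : ℕ) < n ∧ w j = x) → x ∈ off i := by
              intro x hx hxm
              rcases hxm with hxS | ⟨j, hjn, rfl⟩
              · exact (hoffmem i x).2 ⟨hx, (hmemS x).1 hxS⟩
              · rcases (hindu i j).1 hx with h' | h' <;> omega
            have hu2 := hclaim u hadj hu
            have hu'2 := hclaim u' hadj' hu'
            have hcard := hoffcard1 i (by omega)
            exact hne (Finset.card_le_one.mp (le_of_eq hcard) _ hu2 _ hu'2)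
      · rintro (hv | ⟨j, hj, rfl⟩)
        · exact Or.inl (Or.inl hv)
        · by_cases hjn : (j : ℕ) < n
          · exact Or.inl (Or.inr ⟨j, hjn, rfl⟩)
          · have hjn' : (j : ℕ) = n := by omega
            right
            by_cases hj0 : (j : ℕ) = 0
            · obtain ⟨u, hu, u', hu', hne⟩ :=
                Finset.one_lt_card.mp (show 1 < (off j).card by have := hoff0 j hj0; omega)
              rw [hoffmem] at hu hu'
              exact ⟨u, u', hne, hu.1, hu'.1, Or.inl ((hmemS u).2 hu.2),
                Or.inl ((hmemS u').2 hu'.2)⟩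
            · have hprev : (j : ℕ) - 1 < t := by omega
              obtain ⟨u', hu'⟩ := Finset.card_eq_one.mp (hoffcard1 j (by omega))
              have hu'mem : u' ∈ off j := by rw [hu']; exact Finset.mem_singleton_self u'
              rw [hoffmem] at hu'mem
              refine ⟨w ⟨(j : ℕ) - 1, hprev⟩, u', ?_, ?_, hu'mem.1,
                Or.inr ⟨⟨(j : ℕ) - 1, hprev⟩, show (j : ℕ) - 1 < n by omega, rfl⟩,
                Or.inl ((hmemS u').2 hu'mem.2)⟩
              · intro hcon
                exact hu'mem.2 ⟨_, hcon⟩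
              · exact (hindu j ⟨(j : ℕ) - 1, hprev⟩).2 (Or.inr (show (j : ℕ) - 1 + 1 = (j : ℕ) by omega))
  have hstage_t : stage G S t = Set.univ := by
    rw [key t]
    ext v
    simp only [Set.mem_union, Set.mem_image, Set.mem_setOf_eq, Set.mem_univ, iff_true]
    by_cases hv : v ∈ Set.range w
    · obtain ⟨j, rfl⟩ := hv
      exact Or.inr ⟨j, j.isLt, rfl⟩
    · exact Or.inl ((hmemS v).2 hv)
  have hmemstage : ∀ (i : Fin t) (k : ℕ), w i ∈ stage G S k ↔ (i : ℕ) < k := by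
    intro i k
    rw [key k]
    constructor
    · rintro (h | ⟨j, hj, hji⟩)
      · exact absurd ⟨i, rfl⟩ ((hmemS _).1 h)
      · cases hinj hji
        exact hj
    · intro h
      exact Or.inr ⟨i, h, rfl⟩
  refine ⟨⟨t, hstage_t⟩, ?_, ?_⟩
  · intro i
    apply le_antisymm
    · exact sInf_le ⟨i.1 + 1, rfl, (hmemstage i _).2 (by omega)⟩
    · apply le_sInf
      rintro b ⟨k, rfl, hk⟩
      have := (hmemstage i k).1 hk
      exact Nat.cast_le.2 (by omega)
  · have hperc : Percolates G S := ⟨t, hstage_t⟩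
    have hpt : percTime G S = t := by
      apply le_antisymm (Nat.sInf_le hstage_t)
      apply le_csInf ⟨t, hstage_t⟩
      intro k hk
      by_contra hlt
      push_neg at hlt
      have hlastlt : t - 1 < t := by omega
      have hmem : w ⟨t - 1, hlastlt⟩ ∈ stage G S k := by
        rw [hk]; trivial
      have := (hmemstage ⟨t - 1, hlastlt⟩ k).1 hmem
      simp at this
      omega
    rw [← hpt]
    apply le_csSup
    · refine ⟨Fintype.card V, ?_⟩
      rintro x ⟨S₀, hp, rfl⟩
      exact percTime_le_card G S₀ hp
    · exact ⟨S, hperc, rfl⟩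
end
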